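/- If gcd(n,m) = 1, then the pair (f₃, φ₃) is an isomorphism between G(n,p,q,m) and G(n,p,q,m⁻¹), where f₃(i,j) = (−m⁻¹i, 1+q−j) and φ₃ = (0 3)(1 2) if q is odd, φ₃ = (0 3) if q is even. -/
import Mathlib


/-- The sign function μ : Z_{2p} → {−1,+1}: +1 iff the representative of j lies in {1,…,p}. -/
def mu (p : ℕ) (j : ZMod (2*p)) : ℤ :=
  if 1 ≤ j.val ∧ j.val ≤ p then 1 else -1

/-- ε₀(i,j) = (i + m·μ(j−q), 1−j+2q). -/
def eps0 (n p : ℕ) (q : ZMod (2*p)) (m : ZMod n) :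
    ZMod n × ZMod (2*p) → ZMod n × ZMod (2*p) :=
  fun v => (v.1 + m * ((mu p (v.2 - q) : ℤ) : ZMod n), 1 - v.2 + 2*q)

/-- ε₁(i,j) = (i, j−(−1)^j). -/
def eps1 (n p : ℕ) : ZMod n × ZMod (2*p) → ZMod n × ZMod (2*p) :=
  fun v => (v.1, v.2 - (-1 : ZMod (2*p)) ^ v.2.val)

/-- ε₂(i,j) = (i, j+(−1)^j). -/
def eps2 (n p : ℕ) : ZMod n × ZMod (2*p) → ZMod n × ZMod (2*p) :=
  fun v => (v.1, v.2 + (-1 : ZMod (2*p)) ^ v.2.val)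

/-- ε₃(i,j) = (i+μ(j), 1−j). -/
def eps3 (n p : ℕ) : ZMod n × ZMod (2*p) → ZMod n × ZMod (2*p) :=
  fun v => (v.1 + ((mu p v.2 : ℤ) : ZMod n), 1 - v.2)


lemma val_one_sub (p : ℕ) (hp : 0 < p) (x : ZMod (2*p)) :
    (1 - x).val = if x.val = 0 then 1 else if x.val = 1 then 0 else 2*p + 1 - x.val := by
  haveI : NeZero (2*p) := ⟨by omega⟩
  haveI : Fact (1 < 2*p) := ⟨by omega⟩
  by_cases hx0 : x = 0
  · simp [hx0, ZMod.val_one]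
  · have h0 : x.val ≠ 0 := fun h => hx0 ((ZMod.val_eq_zero x).mp h)
    have hlt := ZMod.val_lt x
    rw [sub_eq_add_neg, ZMod.val_add, ZMod.neg_val, if_neg hx0, ZMod.val_one]
    rcases eq_or_ne x.val 1 with h1 | h1
    · have h2 : 1 + (2*p - x.val) = 2*p := by omega
      rw [h2, Nat.mod_self, if_neg h0, if_pos h1]
    · have hlt2 : 1 + (2*p - x.val) < 2*p := by omega
      rw [Nat.mod_eq_of_lt hlt2, if_neg h0, if_neg h1]
      omega

lemma mu_one_sub (p : ℕ) (hp : 0 < p) (x : ZMod (2*p)) : mu p (1 - x) = - mu p x := by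
  haveI : NeZero (2*p) := ⟨by omega⟩
  have hlt := ZMod.val_lt x
  unfold mu
  rw [val_one_sub p hp]
  split_ifs <;> omega

lemma np (p : ℕ) {k l : ℕ} (h : k % 2 = l % 2) :
    ((-1 : ZMod (2*p)) ^ k) = (-1) ^ l := by
  rw [← Nat.div_add_mod k 2, ← Nat.div_add_mod l 2, pow_add, pow_add, pow_mul, pow_mul, h,
    neg_one_sq, one_pow, one_pow]

lemma val_mod_two_add (p : ℕ) (hp : 0 < p) (a b : ZMod (2*p)) :
    (a + b).val % 2 = (a.val + b.val) % 2 := by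
  haveI : NeZero (2*p) := ⟨by omega⟩
  rw [ZMod.val_add, Nat.mod_mod_of_dvd _ ⟨p, rfl⟩]

lemma val_mod_two_neg (p : ℕ) (hp : 0 < p) (a : ZMod (2*p)) :
    (-a).val % 2 = a.val % 2 := by
  haveI : NeZero (2*p) := ⟨by omega⟩
  rw [ZMod.neg_val]
  have := ZMod.val_lt a
  split_ifs with h
  · simp [h]
  · omega

lemma key_parity (p : ℕ) (hp : 0 < p) (q j : ZMod (2*p)) :
    (1 + q - j).val % 2 = (1 + q.val + j.val) % 2 := by
  haveI : NeZero (2*p) := ⟨by omega⟩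
  haveI : Fact (1 < 2*p) := ⟨by omega⟩
  have h1 : (1 + q - j) = (1 + q) + (-j) := by ring
  have h2 := val_mod_two_add p hp (1+q) (-j)
  have h3 := val_mod_two_add p hp 1 q
  have h4 := val_mod_two_neg p hp j
  have h5 : (1 : ZMod (2*p)).val = 1 := ZMod.val_one _
  rw [h1]
  omega

/-- If gcd(n,m) = 1, then (f₃, φ₃), with f₃(i,j) = (−m⁻¹ i, 1+q−j) and
φ₃ = (0 3)(1 2) for q odd, φ₃ = (0 3) for q even, is an isomorphism between
G(n,p,q,m) and G(n,p,q,m⁻¹). -/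
theorem f3_isom (n p : ℕ) (hn : 0 < n) (hp : 0 < p)
    (q : ZMod (2*p)) (m mi : ZMod n) (hm : m * mi = 1) :
    Function.Bijective
      (fun v : ZMod n × ZMod (2*p) => ((-(mi * v.1), 1 + q - v.2) : ZMod n × ZMod (2*p))) ∧
    (∀ v : ZMod n × ZMod (2*p),
      (fun v : ZMod n × ZMod (2*p) => ((-(mi * v.1), 1 + q - v.2) : ZMod n × ZMod (2*p)))
        (eps0 n p q m v) = eps3 n p ((-(mi * v.1), 1 + q - v.2))) ∧
    (∀ v : ZMod n × ZMod (2*p),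
      (fun v : ZMod n × ZMod (2*p) => ((-(mi * v.1), 1 + q - v.2) : ZMod n × ZMod (2*p)))
        (eps3 n p v) = eps0 n p q mi ((-(mi * v.1), 1 + q - v.2))) ∧
    (Odd q.val →
      (∀ v : ZMod n × ZMod (2*p),
        (fun v : ZMod n × ZMod (2*p) => ((-(mi * v.1), 1 + q - v.2) : ZMod n × ZMod (2*p)))
          (eps1 n p v) = eps2 n p ((-(mi * v.1), 1 + q - v.2))) ∧
      (∀ v : ZMod n × ZMod (2*p),
        (fun v : ZMod n × ZMod (2*p) => ((-(mi * v.1), 1 + q - v.2) : ZMod n × ZMod (2*p)))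
          (eps2 n p v) = eps1 n p ((-(mi * v.1), 1 + q - v.2)))) ∧
    (Even q.val →
      (∀ v : ZMod n × ZMod (2*p),
        (fun v : ZMod n × ZMod (2*p) => ((-(mi * v.1), 1 + q - v.2) : ZMod n × ZMod (2*p)))
          (eps1 n p v) = eps1 n p ((-(mi * v.1), 1 + q - v.2))) ∧
      (∀ v : ZMod n × ZMod (2*p),
        (fun v : ZMod n × ZMod (2*p) => ((-(mi * v.1), 1 + q - v.2) : ZMod n × ZMod (2*p)))
          (eps2 n p v) = eps2 n p ((-(mi * v.1), 1 + q - v.2)))) := by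
  
  haveI : NeZero (2*p) := ⟨by omega⟩
  have hm' : mi * m = 1 := by rw [mul_comm]; exact hm
  refine ⟨?_, ?_, ?_, ?_, ?_⟩
  · apply Function.bijective_iff_has_inverse.mpr
    refine ⟨fun w => (-(m * w.1), 1 + q - w.2), fun v => ?_, fun v => ?_⟩
    · obtain ⟨a, b⟩ := v
      simp only [Prod.mk.injEq]
      exact ⟨by rw [mul_neg, neg_neg, ← mul_assoc, hm, one_mul], by ring⟩
    · obtain ⟨a, b⟩ := v
      simp only [Prod.mk.injEq]
      exact ⟨by rw [mul_neg, neg_neg, ← mul_assoc, hm', one_mul], by ring⟩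
  · intro v
    simp only [eps0, eps3, Prod.mk.injEq]
    have harg : (1 : ZMod (2*p)) + q - v.2 = 1 - (v.2 - q) := by ring
    rw [harg, mu_one_sub p hp]
    push_cast
    refine ⟨?_, by ring⟩
    linear_combination (-(((mu p (v.2 - q) : ℤ)) : ZMod n)) * hm'
  · intro v
    simp only [eps0, eps3, Prod.mk.injEq]
    have harg : (1 : ZMod (2*p)) + q - v.2 - q = 1 - v.2 := by ring
    rw [harg, mu_one_sub p hp]
    push_cast
    exact ⟨by ring, by ring⟩
  · intro hq
    have hq2 : q.val % 2 = 1 := Nat.odd_iff.mp hq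
    have hkp := key_parity p hp q
    constructor <;> intro v <;>
    · simp only [eps1, eps2, Prod.mk.injEq]
      have hk : ((-1 : ZMod (2*p)) ^ (1 + q - v.2).val) = (-1) ^ v.2.val :=
        np p (by have := hkp v.2; omega)
      rw [hk]
      exact ⟨trivial, by ring⟩
  · intro hq
    have hq2 : q.val % 2 = 0 := Nat.even_iff.mp hq
    have hkp := key_parity p hp q
    constructor <;> intro v <;>
    · simp only [eps1, eps2, Prod.mk.injEq]
      have hk : ((-1 : ZMod (2*p)) ^ (1 + q - v.2).val) = (-1) ^ (v.2.val + 1) :=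
        np p (by have := hkp v.2; omega)
      rw [hk, pow_succ]
      exact ⟨trivial, by ring⟩
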